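/- Suppose L(x, λ, t) is C² and there exist α₁, α₂ > 0 such that, for each t and λ, the Riemannian Hessian of x ↦ L(x,λ,t) in metric M_x(x) satisfies H_x ⪰ α₁M_x, and for each t and x, the Riemannian Hessian of λ ↦ -L(x,λ,t) in metric M_λ(λ) satisfies H_λ ⪰ α₂M_λ. Then the primal-dual dynamics M_x(x)ẋ = -∂L/∂x, M_λ(λ)λ̇ = ∂L/∂λ are contracting in the block-diagonal metric M = diag(M_x, M_λ) with rate min(α₁, α₂): the overall Jacobian A satisfies Ṁ + AᵀM + MA ⪯ -2 min(α₁,α₂) M. -/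

import Mathlib

open Matrix

noncomputable def pd {ι : Type*} [Fintype ι] [DecidableEq ι]
    (f : (ι → ℝ) → ℝ) (i : ι) (x : ι → ℝ) : ℝ :=
  fderiv ℝ f x (Pi.single i 1)

noncomputable def christoffel {ι : Type*} [Fintype ι] [DecidableEq ι]
    (M : (ι → ℝ) → Matrix ι ι ℝ) (m i j : ι) (x : ι → ℝ) : ℝ :=
  (1 / 2) * ∑ k, (M x)⁻¹ m k *
    (pd (fun y => M y i k) j x + pd (fun y => M y j k) i x - pd (fun y => M y i j) k x)

noncomputable def riemHess {ι : Type*} [Fintype ι] [DecidableEq ι]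
    (M : (ι → ℝ) → Matrix ι ι ℝ) (f : (ι → ℝ) → ℝ) (x : ι → ℝ) : Matrix ι ι ℝ :=
  Matrix.of fun i j =>
    pd (fun y => pd f j y) i x - ∑ k, christoffel M k i j x * pd f k x

/-- Jacobian of a time-dependent vector field on (ι → ℝ). -/
noncomputable def jacobian {ι : Type*} [Fintype ι] [DecidableEq ι]
    (h : (ι → ℝ) → ℝ → ι → ℝ) (x : ι → ℝ) (t : ℝ) : Matrix ι ι ℝ :=
  Matrix.of fun i j => pd (fun y => h y t i) j x

/-- Ṁ = Σᵢ (∂M/∂xᵢ) hᵢ along the vector field h. -/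
noncomputable def mDot {ι : Type*} [Fintype ι] [DecidableEq ι]
    (M : (ι → ℝ) → Matrix ι ι ℝ) (h : (ι → ℝ) → ℝ → ι → ℝ) (x : ι → ℝ) (t : ℝ) :
    Matrix ι ι ℝ :=
  Matrix.of fun i j => ∑ k, pd (fun y => M y i j) k x * h x t k

/-- Combined block-diagonal metric M = diag(M_x, M_λ) on the product state. -/
noncomputable def pdMetric {n m : ℕ}
    (Mx : (Fin n → ℝ) → Matrix (Fin n) (Fin n) ℝ)
    (Ml : (Fin m → ℝ) → Matrix (Fin m) (Fin m) ℝ)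
    (z : (Fin n ⊕ Fin m) → ℝ) : Matrix (Fin n ⊕ Fin m) (Fin n ⊕ Fin m) ℝ :=
  Matrix.fromBlocks (Mx (z ∘ Sum.inl)) 0 0 (Ml (z ∘ Sum.inr))

/-- The geodesic primal-dual dynamics M_x ẋ = -∂L/∂x, M_λ λ̇ = ∂L/∂λ as a
vector field on the combined state z = (x, λ). -/
noncomputable def pdDynamics {n m : ℕ}
    (L : (Fin n → ℝ) → (Fin m → ℝ) → ℝ → ℝ)
    (Mx : (Fin n → ℝ) → Matrix (Fin n) (Fin n) ℝ)
    (Ml : (Fin m → ℝ) → Matrix (Fin m) (Fin m) ℝ)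
    (z : (Fin n ⊕ Fin m) → ℝ) (t : ℝ) : (Fin n ⊕ Fin m) → ℝ :=
  Sum.elim
    (-((Mx (z ∘ Sum.inl))⁻¹.mulVec fun i =>
        pd (fun y => L y (z ∘ Sum.inr) t) i (z ∘ Sum.inl)))
    ((Ml (z ∘ Sum.inr))⁻¹.mulVec fun j =>
        pd (fun μ => L (z ∘ Sum.inl) μ t) j (z ∘ Sum.inr))


section basic
variable {ι : Type*} [Fintype ι] [DecidableEq ι]

lemma pd_sum {κ : Type*} (s : Finset κ) (f : κ → (ι → ℝ) → ℝ) (i : ι) (x : ι → ℝ)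
    (hf : ∀ k ∈ s, DifferentiableAt ℝ (f k) x) :
    pd (fun y => ∑ k ∈ s, f k y) i x = ∑ k ∈ s, pd (f k) i x := by
  unfold pd
  rw [fderiv_fun_sum hf]
  simp [ContinuousLinearMap.sum_apply]

lemma pd_mul {f g : (ι → ℝ) → ℝ} {x : ι → ℝ} (i : ι)
    (hf : DifferentiableAt ℝ f x) (hg : DifferentiableAt ℝ g x) :
    pd (fun y => f y * g y) i x = pd f i x * g x + f x * pd g i x := by
  unfold pd
  rw [fderiv_fun_mul hf hg]
  simp only [ContinuousLinearMap.add_apply, ContinuousLinearMap.smul_apply, smul_eq_mul]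
  ring

lemma pd_neg {f : (ι → ℝ) → ℝ} {x : ι → ℝ} (i : ι) :
    pd (fun y => -f y) i x = -pd f i x := by
  unfold pd; rw [fderiv_fun_neg]; simp

lemma pd_const (c : ℝ) (i : ι) (x : ι → ℝ) : pd (fun _ => c) i x = 0 := by
  unfold pd; simp

end basic

section clm
variable {n m : ℕ}

noncomputable def res1CLM (n m : ℕ) : ((Fin n ⊕ Fin m) → ℝ) →L[ℝ] (Fin n → ℝ) :=
  ContinuousLinearMap.pi fun i => ContinuousLinearMap.proj (Sum.inl i)

noncomputable def res2CLM (n m : ℕ) : ((Fin n ⊕ Fin m) → ℝ) →L[ℝ] (Fin m → ℝ) :=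
  ContinuousLinearMap.pi fun j => ContinuousLinearMap.proj (Sum.inr j)

noncomputable def elimLCLM (n m : ℕ) : (Fin n → ℝ) →L[ℝ] ((Fin n ⊕ Fin m) → ℝ) :=
  ContinuousLinearMap.pi fun s =>
    Sum.elim (fun i => ContinuousLinearMap.proj i) (fun _ => 0) s

noncomputable def elimRCLM (n m : ℕ) : (Fin m → ℝ) →L[ℝ] ((Fin n ⊕ Fin m) → ℝ) :=
  ContinuousLinearMap.pi fun s =>
    Sum.elim (fun _ => 0) (fun j => ContinuousLinearMap.proj j) s

@[simp] lemma res1CLM_apply (z : (Fin n ⊕ Fin m) → ℝ) : res1CLM n m z = z ∘ Sum.inl := rfl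
@[simp] lemma res2CLM_apply (z : (Fin n ⊕ Fin m) → ℝ) : res2CLM n m z = z ∘ Sum.inr := rfl

@[simp] lemma elimLCLM_apply (v : Fin n → ℝ) : elimLCLM n m v = Sum.elim v 0 := by
  funext s; cases s <;> simp [elimLCLM]

@[simp] lemma elimRCLM_apply (v : Fin m → ℝ) : elimRCLM n m v = Sum.elim (0 : Fin n → ℝ) v := by
  funext s; cases s <;> simp [elimRCLM]

lemma hasFDerivAt_elim_constR (c : Fin m → ℝ) (y : Fin n → ℝ) :
    HasFDerivAt (fun w : Fin n → ℝ => Sum.elim w c) (elimLCLM n m) y := by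
  have h : (fun w : Fin n → ℝ => Sum.elim w c)
      = fun w => elimLCLM n m w + Sum.elim (0 : Fin n → ℝ) c := by
    funext w s; cases s <;> simp
  rw [h]
  exact (elimLCLM n m).hasFDerivAt.add_const _

lemma hasFDerivAt_elim_constL (c : Fin n → ℝ) (y : Fin m → ℝ) :
    HasFDerivAt (fun w : Fin m → ℝ => Sum.elim c w) (elimRCLM n m) y := by
  have h : (fun w : Fin m → ℝ => Sum.elim c w)
      = fun w => elimRCLM n m w + Sum.elim c (0 : Fin m → ℝ) := by
    funext w s; cases s <;> simp
  rw [h]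
  exact (elimRCLM n m).hasFDerivAt.add_const _

@[simp] lemma elim_comp_inl_inr (z : (Fin n ⊕ Fin m) → ℝ) :
    Sum.elim (z ∘ Sum.inl) (z ∘ Sum.inr) = z := by
  funext s; cases s <;> rfl

@[simp] lemma single_inl_comp_inl (i : Fin n) :
    (Pi.single (Sum.inl i : Fin n ⊕ Fin m) (1:ℝ)) ∘ Sum.inl = Pi.single i 1 := by
  funext a
  simp [Pi.single_apply, Function.comp]

@[simp] lemma single_inr_comp_inr (j : Fin m) :
    (Pi.single (Sum.inr j : Fin n ⊕ Fin m) (1:ℝ)) ∘ Sum.inr = Pi.single j 1 := by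
  funext a
  simp [Pi.single_apply, Function.comp]

@[simp] lemma single_inl_comp_inr (i : Fin n) :
    (Pi.single (Sum.inl i : Fin n ⊕ Fin m) (1:ℝ)) ∘ Sum.inr = 0 := by
  funext a
  simp [Pi.single_apply, Function.comp]

@[simp] lemma single_inr_comp_inl (j : Fin m) :
    (Pi.single (Sum.inr j : Fin n ⊕ Fin m) (1:ℝ)) ∘ Sum.inl = 0 := by
  funext a
  simp [Pi.single_apply, Function.comp]

@[simp] lemma elim_single_zeroR (i : Fin n) :
    Sum.elim (Pi.single i (1:ℝ)) (0 : Fin m → ℝ) = Pi.single (Sum.inl i) 1 := by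
  funext s; cases s with
  | inl a => simp [Pi.single_apply]
  | inr b => simp [Pi.single_apply]

@[simp] lemma elim_single_zeroL (j : Fin m) :
    Sum.elim (0 : Fin n → ℝ) (Pi.single j (1:ℝ)) = Pi.single (Sum.inr j) 1 := by
  funext s; cases s with
  | inl a => simp [Pi.single_apply]
  | inr b => simp [Pi.single_apply]

end clm

section comp
variable {n m : ℕ}

lemma diff_comp_res1 {f : (Fin n → ℝ) → ℝ} {z : (Fin n ⊕ Fin m) → ℝ}
    (hf : DifferentiableAt ℝ f (z ∘ Sum.inl)) :
    DifferentiableAt ℝ (fun y => f (y ∘ Sum.inl)) z :=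
  hf.comp z (res1CLM n m).differentiableAt

lemma diff_comp_res2 {f : (Fin m → ℝ) → ℝ} {z : (Fin n ⊕ Fin m) → ℝ}
    (hf : DifferentiableAt ℝ f (z ∘ Sum.inr)) :
    DifferentiableAt ℝ (fun y => f (y ∘ Sum.inr)) z :=
  hf.comp z (res2CLM n m).differentiableAt

lemma pd_comp_res1 {f : (Fin n → ℝ) → ℝ} {z : (Fin n ⊕ Fin m) → ℝ}
    (hf : DifferentiableAt ℝ f (z ∘ Sum.inl)) (s : Fin n ⊕ Fin m) :
    pd (fun y => f (y ∘ Sum.inl)) s z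
      = Sum.elim (fun k => pd f k (z ∘ Sum.inl)) (fun _ => 0) s := by
  have hσ : HasFDerivAt (fun y : (Fin n ⊕ Fin m) → ℝ => f (y ∘ Sum.inl))
      ((fderiv ℝ f (z ∘ Sum.inl)).comp (res1CLM n m)) z :=
    hf.hasFDerivAt.comp z (res1CLM n m).hasFDerivAt
  unfold pd
  rw [hσ.fderiv]
  cases s <;> simp

lemma pd_comp_res2 {f : (Fin m → ℝ) → ℝ} {z : (Fin n ⊕ Fin m) → ℝ}
    (hf : DifferentiableAt ℝ f (z ∘ Sum.inr)) (s : Fin n ⊕ Fin m) :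
    pd (fun y => f (y ∘ Sum.inr)) s z
      = Sum.elim (fun _ => 0) (fun k => pd f k (z ∘ Sum.inr)) s := by
  have hσ : HasFDerivAt (fun y : (Fin n ⊕ Fin m) → ℝ => f (y ∘ Sum.inr))
      ((fderiv ℝ f (z ∘ Sum.inr)).comp (res2CLM n m)) z :=
    hf.hasFDerivAt.comp z (res2CLM n m).hasFDerivAt
  unfold pd
  rw [hσ.fderiv]
  cases s <;> simp

lemma pd_elimL {f : ((Fin n ⊕ Fin m) → ℝ) → ℝ} {z : (Fin n ⊕ Fin m) → ℝ}
    (hf : DifferentiableAt ℝ f z) (i : Fin n) :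
    pd (fun y => f (Sum.elim y (z ∘ Sum.inr))) i (z ∘ Sum.inl) = pd f (Sum.inl i) z := by
  have h2 : HasFDerivAt f (fderiv ℝ f z) (Sum.elim (z ∘ Sum.inl) (z ∘ Sum.inr)) := by
    rw [elim_comp_inl_inr]; exact hf.hasFDerivAt
  have hσ : HasFDerivAt (fun y => f (Sum.elim y (z ∘ Sum.inr)))
      ((fderiv ℝ f z).comp (elimLCLM n m)) (z ∘ Sum.inl) :=
    h2.comp (z ∘ Sum.inl) (hasFDerivAt_elim_constR (z ∘ Sum.inr) (z ∘ Sum.inl))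
  unfold pd
  rw [hσ.fderiv]
  simp

lemma pd_elimR {f : ((Fin n ⊕ Fin m) → ℝ) → ℝ} {z : (Fin n ⊕ Fin m) → ℝ}
    (hf : DifferentiableAt ℝ f z) (j : Fin m) :
    pd (fun y => f (Sum.elim (z ∘ Sum.inl) y)) j (z ∘ Sum.inr) = pd f (Sum.inr j) z := by
  have h2 : HasFDerivAt f (fderiv ℝ f z) (Sum.elim (z ∘ Sum.inl) (z ∘ Sum.inr)) := by
    rw [elim_comp_inl_inr]; exact hf.hasFDerivAt
  have hσ : HasFDerivAt (fun y => f (Sum.elim (z ∘ Sum.inl) y))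
      ((fderiv ℝ f z).comp (elimRCLM n m)) (z ∘ Sum.inr) :=
    h2.comp (z ∘ Sum.inr) (hasFDerivAt_elim_constL (z ∘ Sum.inl) (z ∘ Sum.inr))
  unfold pd
  rw [hσ.fderiv]
  simp

end comp

section snd
variable {ι : Type*} [Fintype ι] [DecidableEq ι]

set_option linter.unusedSectionVars false

lemma contDiff_pd_right {f : (ι → ℝ) → ℝ} (hf : ContDiff ℝ 2 f) (v : ι → ℝ) :
    ContDiff ℝ 1 (fun y => fderiv ℝ f y v) := by
  have h := hf.fderiv_right (m := 1) (by norm_num)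
  exact h.clm_apply contDiff_const

lemma diff_pd {f : (ι → ℝ) → ℝ} (hf : ContDiff ℝ 2 f) (j : ι) (x : ι → ℝ) :
    DifferentiableAt ℝ (fun y => pd f j y) x := by
  unfold pd
  exact ((contDiff_pd_right hf (Pi.single j 1)).differentiable (by norm_num)) x

lemma pd_pd {f : (ι → ℝ) → ℝ} (hf : ContDiff ℝ 2 f) (i j : ι) (x : ι → ℝ) :
    pd (fun y => pd f j y) i x
      = fderiv ℝ (fderiv ℝ f) x (Pi.single i 1) (Pi.single j 1) := by
  unfold pd
  rw [fderiv_clm_apply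
        (((hf.fderiv_right (m := 1) (by norm_num)).differentiable (by norm_num)) x)
        (differentiableAt_const _)]
  simp

lemma pd_pd_symm {f : (ι → ℝ) → ℝ} (hf : ContDiff ℝ 2 f) (i j : ι) (x : ι → ℝ) :
    pd (fun y => pd f j y) i x = pd (fun y => pd f i y) j x := by
  rw [pd_pd hf, pd_pd hf,
    (hf.contDiffAt.isSymmSndFDerivAt (by norm_num)).eq]

end snd

section inv
variable {ι : Type*} [Fintype ι] [DecidableEq ι]
variable {X : Type*} [NormedAddCommGroup X] [NormedSpace ℝ X]

lemma differentiableAt_det {A : X → Matrix ι ι ℝ} {x : X}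
    (hA : ∀ i j, DifferentiableAt ℝ (fun y => A y i j) x) :
    DifferentiableAt ℝ (fun y => (A y).det) x := by
  simp only [Matrix.det_apply']
  apply DifferentiableAt.fun_sum
  intro σ _
  apply DifferentiableAt.const_mul
  exact (HasFDerivAt.finset_prod (fun i (_ : i ∈ Finset.univ) =>
    (hA (σ i) i).hasFDerivAt)).differentiableAt

lemma differentiableAt_adjugate {A : X → Matrix ι ι ℝ} {x : X}
    (hA : ∀ i j, DifferentiableAt ℝ (fun y => A y i j) x) (i j : ι) :
    DifferentiableAt ℝ (fun y => (A y).adjugate i j) x := by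
  simp only [Matrix.adjugate_apply]
  apply differentiableAt_det
  intro a b
  simp only [Matrix.updateRow_apply]
  by_cases h : a = j
  · simp [h]
  · simp only [h, if_false]
    exact hA a b

lemma differentiableAt_inv_entry {A : X → Matrix ι ι ℝ} {x : X}
    (hA : ∀ i j, DifferentiableAt ℝ (fun y => A y i j) x)
    (hdet : (A x).det ≠ 0) (i j : ι) :
    DifferentiableAt ℝ (fun y => (A y)⁻¹ i j) x := by
  have h : (fun y => (A y)⁻¹ i j) = fun y => ((A y).det)⁻¹ * (A y).adjugate i j := by
    funext y
    rw [Matrix.inv_def, Ring.inverse_eq_inv']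
    simp [Matrix.smul_apply]
  rw [h]
  exact ((differentiableAt_det hA).inv hdet).mul (differentiableAt_adjugate hA i j)

end inv

section psd

lemma posSemidef_add' {ι : Type*} [Fintype ι] {A B : Matrix ι ι ℝ}
    (hA : A.PosSemidef) (hB : B.PosSemidef) : (A + B).PosSemidef := by
  refine .of_dotProduct_mulVec_nonneg (hA.1.add hB.1) fun v => ?_
  rw [Matrix.add_mulVec, dotProduct_add]
  exact add_nonneg (hA.dotProduct_mulVec_nonneg v) (hB.dotProduct_mulVec_nonneg v)

lemma posSemidef_smul' {ι : Type*} [Fintype ι] {A : Matrix ι ι ℝ}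
    (hA : A.PosSemidef) {c : ℝ} (hc : 0 ≤ c) : (c • A).PosSemidef := by
  refine .of_dotProduct_mulVec_nonneg ?_ fun v => ?_
  · unfold Matrix.IsHermitian
    rw [Matrix.conjTranspose_smul, star_trivial, hA.1]
  · rw [Matrix.smul_mulVec, dotProduct_smul, smul_eq_mul]
    exact mul_nonneg hc (hA.dotProduct_mulVec_nonneg v)

lemma posSemidef_fromBlocks' {n m : ℕ}
    {A : Matrix (Fin n) (Fin n) ℝ} {D : Matrix (Fin m) (Fin m) ℝ}
    (hA : A.PosSemidef) (hD : D.PosSemidef) :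
    (Matrix.fromBlocks A 0 0 D).PosSemidef := by
  refine .of_dotProduct_mulVec_nonneg ?_ fun v => ?_
  · unfold Matrix.IsHermitian
    rw [Matrix.fromBlocks_conjTranspose, hA.1, hD.1]
    simp
  · rw [Matrix.fromBlocks_mulVec]
    simp only [Matrix.zero_mulVec, add_zero, zero_add]
    have hsplit : star v ⬝ᵥ Sum.elim (A *ᵥ (v ∘ Sum.inl)) (D *ᵥ (v ∘ Sum.inr))
        = star (v ∘ Sum.inl) ⬝ᵥ (A *ᵥ (v ∘ Sum.inl))
          + star (v ∘ Sum.inr) ⬝ᵥ (D *ᵥ (v ∘ Sum.inr)) := by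
      simp [dotProduct, Fintype.sum_sum_type]
    rw [hsplit]
    exact add_nonneg (hA.dotProduct_mulVec_nonneg _) (hD.dotProduct_mulVec_nonneg _)

lemma contract_dot {ι : Type*} [Fintype ι] [DecidableEq ι]
    (P : Matrix ι ι ℝ) (hP : P.IsSymm) (hdet : IsUnit P.det) (D3 hx : ι → ℝ) :
    ((1/2 : ℝ) • (P⁻¹ *ᵥ D3)) ⬝ᵥ (-(P *ᵥ hx)) = -(1/2 : ℝ) * (D3 ⬝ᵥ hx) := by
  rw [dotProduct_neg, smul_dotProduct, dotProduct_mulVec]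
  have hv : (P⁻¹ *ᵥ D3) ᵥ* P = D3 := by
    rw [← Matrix.mulVec_transpose, hP, Matrix.mulVec_mulVec,
      Matrix.mul_nonsing_inv P hdet, Matrix.one_mulVec]
  rw [hv]
  simp [mul_comm]

end psd

section main
variable {n m : ℕ}
variable {L : (Fin n → ℝ) → (Fin m → ℝ) → ℝ → ℝ}
variable {Mx : (Fin n → ℝ) → Matrix (Fin n) (Fin n) ℝ}
variable {Ml : (Fin m → ℝ) → Matrix (Fin m) (Fin m) ℝ}

noncomputable def bigL (L : (Fin n → ℝ) → (Fin m → ℝ) → ℝ → ℝ) (t : ℝ) :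
    ((Fin n ⊕ Fin m) → ℝ) → ℝ :=
  fun z => L (z ∘ Sum.inl) (z ∘ Sum.inr) t

lemma bigL_contDiff
    (hL : ContDiff ℝ 2 (fun p : ((Fin n → ℝ) × (Fin m → ℝ)) × ℝ => L p.1.1 p.1.2 p.2))
    (t : ℝ) : ContDiff ℝ 2 (bigL L t) := by
  have h : bigL L t = (fun p : ((Fin n → ℝ) × (Fin m → ℝ)) × ℝ => L p.1.1 p.1.2 p.2) ∘
      (fun z => ((res1CLM n m z, res2CLM n m z), t)) := rfl
  rw [h]
  exact hL.comp (ContDiff.prodMk (ContDiff.prodMk (res1CLM n m).contDiff (res2CLM n m).contDiff) contDiff_const)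

lemma pdL_eq
    (hL : ContDiff ℝ 2 (fun p : ((Fin n → ℝ) × (Fin m → ℝ)) × ℝ => L p.1.1 p.1.2 p.2))
    (t : ℝ) (w : (Fin n ⊕ Fin m) → ℝ) (i : Fin n) :
    pd (fun y => L y (w ∘ Sum.inr) t) i (w ∘ Sum.inl) = pd (bigL L t) (Sum.inl i) w :=
  pd_elimL (((bigL_contDiff hL t).differentiable (by norm_num)) w) i

lemma pdR_eq
    (hL : ContDiff ℝ 2 (fun p : ((Fin n → ℝ) × (Fin m → ℝ)) × ℝ => L p.1.1 p.1.2 p.2))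
    (t : ℝ) (w : (Fin n ⊕ Fin m) → ℝ) (j : Fin m) :
    pd (fun μ => L (w ∘ Sum.inl) μ t) j (w ∘ Sum.inr) = pd (bigL L t) (Sum.inr j) w :=
  pd_elimR (((bigL_contDiff hL t).differentiable (by norm_num)) w) j

end main

section main2
variable {n m : ℕ}
variable {L : (Fin n → ℝ) → (Fin m → ℝ) → ℝ → ℝ}
variable {Mx : (Fin n → ℝ) → Matrix (Fin n) (Fin n) ℝ}
variable {Ml : (Fin m → ℝ) → Matrix (Fin m) (Fin m) ℝ}

@[simp] lemma pdMetric_11 (y : (Fin n ⊕ Fin m) → ℝ) (i j : Fin n) :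
    pdMetric Mx Ml y (Sum.inl i) (Sum.inl j) = Mx (y ∘ Sum.inl) i j := rfl
@[simp] lemma pdMetric_12 (y : (Fin n ⊕ Fin m) → ℝ) (i : Fin n) (j : Fin m) :
    pdMetric Mx Ml y (Sum.inl i) (Sum.inr j) = 0 := rfl
@[simp] lemma pdMetric_21 (y : (Fin n ⊕ Fin m) → ℝ) (i : Fin m) (j : Fin n) :
    pdMetric Mx Ml y (Sum.inr i) (Sum.inl j) = 0 := rfl
@[simp] lemma pdMetric_22 (y : (Fin n ⊕ Fin m) → ℝ) (i j : Fin m) :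
    pdMetric Mx Ml y (Sum.inr i) (Sum.inr j) = Ml (y ∘ Sum.inr) i j := rfl

variable (hL : ContDiff ℝ 2 (fun p : ((Fin n → ℝ) × (Fin m → ℝ)) × ℝ => L p.1.1 p.1.2 p.2))
variable (hMxsm : ∀ i j, ContDiff ℝ (⊤ : ℕ∞) fun x => Mx x i j)
variable (hMxpos : ∀ x, (Mx x).PosDef)
variable (hMlsm : ∀ i j, ContDiff ℝ (⊤ : ℕ∞) fun l => Ml l i j)
variable (hMlpos : ∀ l, (Ml l).PosDef)

include hL hMxpos in
lemma metric_h_L (t : ℝ) (w : (Fin n ⊕ Fin m) → ℝ) (j : Fin n) :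
    ∑ k, Mx (w ∘ Sum.inl) j k * pdDynamics L Mx Ml w t (Sum.inl k)
      = -pd (bigL L t) (Sum.inl j) w := by
  have hdet : IsUnit (Mx (w ∘ Sum.inl)).det := (hMxpos _).det_pos.ne'.isUnit
  have hfun : (fun k => pdDynamics L Mx Ml w t (Sum.inl k))
      = -((Mx (w ∘ Sum.inl))⁻¹ *ᵥ fun i => pd (bigL L t) (Sum.inl i) w) := by
    funext k
    simp only [pdDynamics, Sum.elim_inl, Pi.neg_apply, Matrix.mulVec, dotProduct]
    exact congrArg Neg.neg (Finset.sum_congr rfl fun l _ => by rw [pdL_eq hL t w l])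
  have hmv : Mx (w ∘ Sum.inl) *ᵥ (fun k => pdDynamics L Mx Ml w t (Sum.inl k))
      = -(fun i => pd (bigL L t) (Sum.inl i) w) := by
    rw [hfun, Matrix.mulVec_neg, Matrix.mulVec_mulVec, Matrix.mul_nonsing_inv _ hdet,
      Matrix.one_mulVec]
  have h2 := congrFun hmv j
  simpa [Matrix.mulVec, dotProduct] using h2

include hL hMlpos in
lemma metric_h_R (t : ℝ) (w : (Fin n ⊕ Fin m) → ℝ) (j : Fin m) :
    ∑ k, Ml (w ∘ Sum.inr) j k * pdDynamics L Mx Ml w t (Sum.inr k)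
      = -pd (fun y => -bigL L t y) (Sum.inr j) w := by
  have hdet : IsUnit (Ml (w ∘ Sum.inr)).det := (hMlpos _).det_pos.ne'.isUnit
  have hfun : (fun k => pdDynamics L Mx Ml w t (Sum.inr k))
      = -((Ml (w ∘ Sum.inr))⁻¹ *ᵥ fun i => pd (fun y => -bigL L t y) (Sum.inr i) w) := by
    funext k
    simp only [pdDynamics, Sum.elim_inr, Pi.neg_apply, Matrix.mulVec, dotProduct]
    rw [← Finset.sum_neg_distrib]
    refine Finset.sum_congr rfl fun l _ => ?_
    rw [pd_neg, ← pdR_eq hL t w l]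
    ring
  have hmv : Ml (w ∘ Sum.inr) *ᵥ (fun k => pdDynamics L Mx Ml w t (Sum.inr k))
      = -(fun i => pd (fun y => -bigL L t y) (Sum.inr i) w) := by
    rw [hfun, Matrix.mulVec_neg, Matrix.mulVec_mulVec, Matrix.mul_nonsing_inv _ hdet,
      Matrix.one_mulVec]
  have h2 := congrFun hmv j
  simpa [Matrix.mulVec, dotProduct] using h2

include hL hMxsm hMxpos in
lemma h_diffL (t : ℝ) (k : Fin n) (w : (Fin n ⊕ Fin m) → ℝ) :
    DifferentiableAt ℝ (fun y => pdDynamics L Mx Ml y t (Sum.inl k)) w := by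
  have hcoord : (fun y => pdDynamics L Mx Ml y t (Sum.inl k))
      = fun y => -∑ l, (Mx (y ∘ Sum.inl))⁻¹ k l * pd (bigL L t) (Sum.inl l) y := by
    funext y
    simp only [pdDynamics, Sum.elim_inl, Pi.neg_apply, Matrix.mulVec, dotProduct]
    exact congrArg Neg.neg (Finset.sum_congr rfl fun l _ => by rw [pdL_eq hL t y l])
  rw [hcoord]
  apply DifferentiableAt.neg
  apply DifferentiableAt.fun_sum
  intro l _
  apply DifferentiableAt.mul
  · exact diff_comp_res1 (differentiableAt_inv_entry
      (fun i j => ((hMxsm i j).differentiable (by simp)).differentiableAt)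
      (hMxpos _).det_pos.ne' k l)
  · exact diff_pd (bigL_contDiff hL t) _ _

include hL hMlsm hMlpos in
lemma h_diffR (t : ℝ) (k : Fin m) (w : (Fin n ⊕ Fin m) → ℝ) :
    DifferentiableAt ℝ (fun y => pdDynamics L Mx Ml y t (Sum.inr k)) w := by
  have hcoord : (fun y => pdDynamics L Mx Ml y t (Sum.inr k))
      = fun y => ∑ l, (Ml (y ∘ Sum.inr))⁻¹ k l * pd (bigL L t) (Sum.inr l) y := by
    funext y
    simp only [pdDynamics, Sum.elim_inr, Matrix.mulVec, dotProduct]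
    exact Finset.sum_congr rfl fun l _ => by rw [pdR_eq hL t y l]
  rw [hcoord]
  apply DifferentiableAt.fun_sum
  intro l _
  apply DifferentiableAt.mul
  · exact diff_comp_res2 (differentiableAt_inv_entry
      (fun i j => ((hMlsm i j).differentiable (by simp)).differentiableAt)
      (hMlpos _).det_pos.ne' k l)
  · exact diff_pd (bigL_contDiff hL t) _ _

include hL hMxsm hMxpos in
lemma coreL (t : ℝ) (z : (Fin n ⊕ Fin m) → ℝ) (j : Fin n) (s : Fin n ⊕ Fin m) :
    ∑ k, Mx (z ∘ Sum.inl) j k * pd (fun y => pdDynamics L Mx Ml y t (Sum.inl k)) s z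
      = - pd (fun y => pd (bigL L t) (Sum.inl j) y) s z
        - ∑ k, pd (fun y => Mx (y ∘ Sum.inl) j k) s z * pdDynamics L Mx Ml z t (Sum.inl k) := by
  have hdM : ∀ k, DifferentiableAt ℝ (fun y => Mx (y ∘ Sum.inl) j k) z :=
    fun k => diff_comp_res1 (((hMxsm j k).differentiable (by simp)).differentiableAt)
  have hdh : ∀ k, DifferentiableAt ℝ (fun y => pdDynamics L Mx Ml y t (Sum.inl k)) z :=
    fun k => h_diffL hL hMxsm hMxpos t k z
  have hid : (fun y => ∑ k, Mx (y ∘ Sum.inl) j k * pdDynamics L Mx Ml y t (Sum.inl k))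
      = fun y => -pd (bigL L t) (Sum.inl j) y :=
    funext fun w => metric_h_L hL hMxpos t w j
  have key := congrArg (fun f => pd f s z) hid
  rw [pd_sum Finset.univ _ s z (fun k _ => (hdM k).fun_mul (hdh k))] at key
  rw [Finset.sum_congr rfl (fun k _ => pd_mul s (hdM k) (hdh k))] at key
  rw [Finset.sum_add_distrib] at key
  have hneg : pd (fun y => -pd (bigL L t) (Sum.inl j) y) s z
      = -pd (fun y => pd (bigL L t) (Sum.inl j) y) s z := pd_neg s
  rw [hneg] at key
  linarith [key]

include hL hMlsm hMlpos in
lemma coreR (t : ℝ) (z : (Fin n ⊕ Fin m) → ℝ) (j : Fin m) (s : Fin n ⊕ Fin m) :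
    ∑ k, Ml (z ∘ Sum.inr) j k * pd (fun y => pdDynamics L Mx Ml y t (Sum.inr k)) s z
      = - pd (fun y => pd (fun y' => -bigL L t y') (Sum.inr j) y) s z
        - ∑ k, pd (fun y => Ml (y ∘ Sum.inr) j k) s z * pdDynamics L Mx Ml z t (Sum.inr k) := by
  have hdM : ∀ k, DifferentiableAt ℝ (fun y => Ml (y ∘ Sum.inr) j k) z :=
    fun k => diff_comp_res2 (((hMlsm j k).differentiable (by simp)).differentiableAt)
  have hdh : ∀ k, DifferentiableAt ℝ (fun y => pdDynamics L Mx Ml y t (Sum.inr k)) z :=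
    fun k => h_diffR hL hMlsm hMlpos t k z
  have hid : (fun y => ∑ k, Ml (y ∘ Sum.inr) j k * pdDynamics L Mx Ml y t (Sum.inr k))
      = fun y => -pd (fun y' => -bigL L t y') (Sum.inr j) y :=
    funext fun w => by
      rw [metric_h_R hL hMlpos t w j]
  have key := congrArg (fun f => pd f s z) hid
  rw [pd_sum Finset.univ _ s z (fun k _ => (hdM k).fun_mul (hdh k))] at key
  rw [Finset.sum_congr rfl (fun k _ => pd_mul s (hdM k) (hdh k))] at key
  rw [Finset.sum_add_distrib] at key
  have hneg : pd (fun y => -pd (fun y' => -bigL L t y') (Sum.inr j) y) s z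
      = -pd (fun y => pd (fun y' => -bigL L t y') (Sum.inr j) y) s z := pd_neg s
  rw [hneg] at key
  linarith [key]

include hL in
lemma pd_pd_L (t : ℝ) (z : (Fin n ⊕ Fin m) → ℝ) (i j : Fin n) :
    pd (fun y => pd (fun y' => L y' (z ∘ Sum.inr) t) j y) i (z ∘ Sum.inl)
      = pd (fun y => pd (bigL L t) (Sum.inl j) y) (Sum.inl i) z := by
  have h1 : (fun y => pd (fun y' => L y' (z ∘ Sum.inr) t) j y)
      = fun y => pd (bigL L t) (Sum.inl j) (Sum.elim y (z ∘ Sum.inr)) := by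
    funext y
    exact pdL_eq hL t (Sum.elim y (z ∘ Sum.inr)) j
  rw [h1]
  exact pd_elimL (diff_pd (bigL_contDiff hL t) _ _) i

include hL in
lemma pd_pd_R (t : ℝ) (z : (Fin n ⊕ Fin m) → ℝ) (i j : Fin m) :
    pd (fun y => pd (fun y' => -L (z ∘ Sum.inl) y' t) j y) i (z ∘ Sum.inr)
      = pd (fun y => pd (fun y' => -bigL L t y') (Sum.inr j) y) (Sum.inr i) z := by
  have hG' : ContDiff ℝ 2 (fun y' => -bigL L t y') := (bigL_contDiff hL t).neg
  have h1 : (fun y => pd (fun y' => -L (z ∘ Sum.inl) y' t) j y)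
      = fun y => pd (fun y' => -bigL L t y') (Sum.inr j) (Sum.elim (z ∘ Sum.inl) y) := by
    funext y
    exact pdR_eq (L := fun a b s => -L a b s) (by exact hL.neg) t (Sum.elim (z ∘ Sum.inl) y) j
  rw [h1]
  exact pd_elimR (diff_pd hG' _ _) i

end main2

section blocks
variable {n m : ℕ}
variable {L : (Fin n → ℝ) → (Fin m → ℝ) → ℝ → ℝ}
variable {Mx : (Fin n → ℝ) → Matrix (Fin n) (Fin n) ℝ}
variable {Ml : (Fin m → ℝ) → Matrix (Fin m) (Fin m) ℝ}
variable (hL : ContDiff ℝ 2 (fun p : ((Fin n → ℝ) × (Fin m → ℝ)) × ℝ => L p.1.1 p.1.2 p.2))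
variable (hMxsm : ∀ i j, ContDiff ℝ (⊤ : ℕ∞) fun x => Mx x i j)
variable (hMxsymm : ∀ x, (Mx x).IsSymm)
variable (hMxpos : ∀ x, (Mx x).PosDef)
variable (hMlsm : ∀ i j, ContDiff ℝ (⊤ : ℕ∞) fun l => Ml l i j)
variable (hMlsymm : ∀ l, (Ml l).IsSymm)
variable (hMlpos : ∀ l, (Ml l).PosDef)

include hL hMxsm hMxsymm hMxpos in
lemma block_xx (t : ℝ) (z : (Fin n ⊕ Fin m) → ℝ) (i j : Fin n) :
    mDot (pdMetric Mx Ml) (pdDynamics L Mx Ml) z t (Sum.inl i) (Sum.inl j)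
      + ((jacobian (pdDynamics L Mx Ml) z t)ᵀ * pdMetric Mx Ml z) (Sum.inl i) (Sum.inl j)
      + (pdMetric Mx Ml z * jacobian (pdDynamics L Mx Ml) z t) (Sum.inl i) (Sum.inl j)
      = -2 * riemHess Mx (fun y => L y (z ∘ Sum.inr) t) (z ∘ Sum.inl) i j := by
  have hdMx : ∀ a b, DifferentiableAt ℝ (fun xx => Mx xx a b) (z ∘ Sum.inl) :=
    fun a b => ((hMxsm a b).differentiable (by simp)).differentiableAt
  have hpdz : ∀ (a b : Fin n) (k : Fin m),
      pd (fun y => Mx (y ∘ Sum.inl) a b) (Sum.inr k) z = 0 := fun a b k => by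
    simpa using pd_comp_res1 (hdMx a b) (Sum.inr k)
  have hpdl : ∀ (a b k : Fin n), pd (fun y => Mx (y ∘ Sum.inl) a b) (Sum.inl k) z
      = pd (fun x' => Mx x' a b) k (z ∘ Sum.inl) := fun a b k => by
    simpa using pd_comp_res1 (hdMx a b) (Sum.inl k)
  -- mDot entry
  have e1 : mDot (pdMetric Mx Ml) (pdDynamics L Mx Ml) z t (Sum.inl i) (Sum.inl j)
      = ∑ k, pd (fun x' => Mx x' i j) k (z ∘ Sum.inl) * pdDynamics L Mx Ml z t (Sum.inl k) := by
    have e0 : mDot (pdMetric Mx Ml) (pdDynamics L Mx Ml) z t (Sum.inl i) (Sum.inl j)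
        = ∑ s, pd (fun y => pdMetric Mx Ml y (Sum.inl i) (Sum.inl j)) s z
            * pdDynamics L Mx Ml z t s := rfl
    rw [e0]
    simp only [pdMetric_11]
    rw [Fintype.sum_sum_type]
    simp [hpdz i j, hpdl i j]
  -- Aᵀ M entry
  have e2 : ((jacobian (pdDynamics L Mx Ml) z t)ᵀ * pdMetric Mx Ml z) (Sum.inl i) (Sum.inl j)
      = - pd (fun y => pd (bigL L t) (Sum.inl j) y) (Sum.inl i) z
        - ∑ k, pd (fun x' => Mx x' j k) i (z ∘ Sum.inl)
            * pdDynamics L Mx Ml z t (Sum.inl k) := by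
    rw [Matrix.mul_apply, Fintype.sum_sum_type]
    simp only [Matrix.transpose_apply, pdMetric_21, mul_zero, Finset.sum_const_zero,
      add_zero, pdMetric_11]
    have step1 : ∑ k, jacobian (pdDynamics L Mx Ml) z t (Sum.inl k) (Sum.inl i)
          * Mx (z ∘ Sum.inl) k j
        = ∑ k, Mx (z ∘ Sum.inl) j k
            * pd (fun y => pdDynamics L Mx Ml y t (Sum.inl k)) (Sum.inl i) z := by
      refine Finset.sum_congr rfl fun k _ => ?_
      have hs := (hMxsymm (z ∘ Sum.inl)).apply j k
      rw [show jacobian (pdDynamics L Mx Ml) z t (Sum.inl k) (Sum.inl i)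
        = pd (fun y => pdDynamics L Mx Ml y t (Sum.inl k)) (Sum.inl i) z from rfl, hs]
      ring
    rw [step1, coreL hL hMxsm hMxpos t z j (Sum.inl i)]
    congr 1
    exact Finset.sum_congr rfl fun k _ => by rw [hpdl j k]
  -- M A entry
  have e3 : (pdMetric Mx Ml z * jacobian (pdDynamics L Mx Ml) z t) (Sum.inl i) (Sum.inl j)
      = - pd (fun y => pd (bigL L t) (Sum.inl i) y) (Sum.inl j) z
        - ∑ k, pd (fun x' => Mx x' i k) j (z ∘ Sum.inl)
            * pdDynamics L Mx Ml z t (Sum.inl k) := by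
    rw [Matrix.mul_apply, Fintype.sum_sum_type]
    simp only [pdMetric_12, zero_mul, Finset.sum_const_zero, add_zero, pdMetric_11]
    have step1 : ∑ k, Mx (z ∘ Sum.inl) i k * jacobian (pdDynamics L Mx Ml) z t (Sum.inl k) (Sum.inl j)
        = ∑ k, Mx (z ∘ Sum.inl) i k
            * pd (fun y => pdDynamics L Mx Ml y t (Sum.inl k)) (Sum.inl j) z := rfl
    rw [step1, coreL hL hMxsm hMxpos t z i (Sum.inl j)]
    congr 1
    exact Finset.sum_congr rfl fun k _ => by rw [hpdl i k]
  -- Hessian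
  have hr : riemHess Mx (fun y => L y (z ∘ Sum.inr) t) (z ∘ Sum.inl) i j
      = pd (fun y => pd (bigL L t) (Sum.inl j) y) (Sum.inl i) z
        - ∑ k, christoffel Mx k i j (z ∘ Sum.inl)
            * pd (fun y => L y (z ∘ Sum.inr) t) k (z ∘ Sum.inl) := by
    have e0 : riemHess Mx (fun y => L y (z ∘ Sum.inr) t) (z ∘ Sum.inl) i j
        = pd (fun y => pd (fun y' => L y' (z ∘ Sum.inr) t) j y) i (z ∘ Sum.inl)
          - ∑ k, christoffel Mx k i j (z ∘ Sum.inl)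
              * pd (fun y => L y (z ∘ Sum.inr) t) k (z ∘ Sum.inl) := rfl
    rw [e0, pd_pd_L hL t z i j]
  -- Christoffel contraction
  have hPdet : IsUnit (Mx (z ∘ Sum.inl)).det := (hMxpos _).det_pos.ne'.isUnit
  have hc : ∑ k, christoffel Mx k i j (z ∘ Sum.inl)
        * pd (fun y => L y (z ∘ Sum.inr) t) k (z ∘ Sum.inl)
      = -(1/2 : ℝ) * ∑ s, (pd (fun x' => Mx x' i s) j (z ∘ Sum.inl)
          + pd (fun x' => Mx x' j s) i (z ∘ Sum.inl)
          - pd (fun x' => Mx x' i j) s (z ∘ Sum.inl))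
          * pdDynamics L Mx Ml z t (Sum.inl s) := by
    set D3 : Fin n → ℝ := fun s => pd (fun x' => Mx x' i s) j (z ∘ Sum.inl)
        + pd (fun x' => Mx x' j s) i (z ∘ Sum.inl)
        - pd (fun x' => Mx x' i j) s (z ∘ Sum.inl) with hD3
    set hxv : Fin n → ℝ := fun s => pdDynamics L Mx Ml z t (Sum.inl s) with hhxv
    have hLHS : ∑ k, christoffel Mx k i j (z ∘ Sum.inl)
          * pd (fun y => L y (z ∘ Sum.inr) t) k (z ∘ Sum.inl)
        = ((1/2 : ℝ) • ((Mx (z ∘ Sum.inl))⁻¹ *ᵥ D3)) ⬝ᵥ (-(Mx (z ∘ Sum.inl) *ᵥ hxv)) := by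
      rw [dotProduct]
      refine Finset.sum_congr rfl fun k _ => ?_
      have h1 : christoffel Mx k i j (z ∘ Sum.inl)
          = ((1/2 : ℝ) • ((Mx (z ∘ Sum.inl))⁻¹ *ᵥ D3)) k := by
        simp only [christoffel, Pi.smul_apply, smul_eq_mul, Matrix.mulVec, dotProduct, hD3]
      have h2 : pd (fun y => L y (z ∘ Sum.inr) t) k (z ∘ Sum.inl)
          = (-(Mx (z ∘ Sum.inl) *ᵥ hxv)) k := by
        rw [pdL_eq hL t z k]
        have hm := metric_h_L (Ml := Ml) hL hMxpos t z k
        simp only [Pi.neg_apply, Matrix.mulVec, dotProduct, hhxv]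
        linarith [hm]
      rw [h1, h2]
    rw [hLHS, contract_dot _ (hMxsymm _) hPdet]
    rw [dotProduct]
  -- assemble
  rw [e1, e2, e3, hr, hc]
  have hsym2 : pd (fun y => pd (bigL L t) (Sum.inl i) y) (Sum.inl j) z
      = pd (fun y => pd (bigL L t) (Sum.inl j) y) (Sum.inl i) z :=
    pd_pd_symm (bigL_contDiff hL t) (Sum.inl j) (Sum.inl i) z
  rw [hsym2]
  have hsplit : ∑ s, (pd (fun x' => Mx x' i s) j (z ∘ Sum.inl)
        + pd (fun x' => Mx x' j s) i (z ∘ Sum.inl)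
        - pd (fun x' => Mx x' i j) s (z ∘ Sum.inl)) * pdDynamics L Mx Ml z t (Sum.inl s)
      = (∑ s, pd (fun x' => Mx x' i s) j (z ∘ Sum.inl) * pdDynamics L Mx Ml z t (Sum.inl s))
        + (∑ s, pd (fun x' => Mx x' j s) i (z ∘ Sum.inl) * pdDynamics L Mx Ml z t (Sum.inl s))
        - ∑ s, pd (fun x' => Mx x' i j) s (z ∘ Sum.inl) * pdDynamics L Mx Ml z t (Sum.inl s) := by
    rw [← Finset.sum_add_distrib, ← Finset.sum_sub_distrib]
    exact Finset.sum_congr rfl fun s _ => by ring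
  rw [hsplit]
  ring

end blocks

section blocks2
variable {n m : ℕ}
variable {L : (Fin n → ℝ) → (Fin m → ℝ) → ℝ → ℝ}
variable {Mx : (Fin n → ℝ) → Matrix (Fin n) (Fin n) ℝ}
variable {Ml : (Fin m → ℝ) → Matrix (Fin m) (Fin m) ℝ}
variable (hL : ContDiff ℝ 2 (fun p : ((Fin n → ℝ) × (Fin m → ℝ)) × ℝ => L p.1.1 p.1.2 p.2))
variable (hMxsm : ∀ i j, ContDiff ℝ (⊤ : ℕ∞) fun x => Mx x i j)
variable (hMxsymm : ∀ x, (Mx x).IsSymm)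
variable (hMxpos : ∀ x, (Mx x).PosDef)
variable (hMlsm : ∀ i j, ContDiff ℝ (⊤ : ℕ∞) fun l => Ml l i j)
variable (hMlsymm : ∀ l, (Ml l).IsSymm)
variable (hMlpos : ∀ l, (Ml l).PosDef)

include hL hMlsm hMlsymm hMlpos in
lemma block_ll (t : ℝ) (z : (Fin n ⊕ Fin m) → ℝ) (i j : Fin m) :
    mDot (pdMetric Mx Ml) (pdDynamics L Mx Ml) z t (Sum.inr i) (Sum.inr j)
      + ((jacobian (pdDynamics L Mx Ml) z t)ᵀ * pdMetric Mx Ml z) (Sum.inr i) (Sum.inr j)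
      + (pdMetric Mx Ml z * jacobian (pdDynamics L Mx Ml) z t) (Sum.inr i) (Sum.inr j)
      = -2 * riemHess Ml (fun μ => -L (z ∘ Sum.inl) μ t) (z ∘ Sum.inr) i j := by
  have hdMl : ∀ a b, DifferentiableAt ℝ (fun ll => Ml ll a b) (z ∘ Sum.inr) :=
    fun a b => ((hMlsm a b).differentiable (by simp)).differentiableAt
  have hpdz : ∀ (a b : Fin m) (k : Fin n),
      pd (fun y => Ml (y ∘ Sum.inr) a b) (Sum.inl k) z = 0 := fun a b k => by
    simpa using pd_comp_res2 (hdMl a b) (Sum.inl k)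
  have hpdl : ∀ (a b k : Fin m), pd (fun y => Ml (y ∘ Sum.inr) a b) (Sum.inr k) z
      = pd (fun x' => Ml x' a b) k (z ∘ Sum.inr) := fun a b k => by
    simpa using pd_comp_res2 (hdMl a b) (Sum.inr k)
  have e1 : mDot (pdMetric Mx Ml) (pdDynamics L Mx Ml) z t (Sum.inr i) (Sum.inr j)
      = ∑ k, pd (fun x' => Ml x' i j) k (z ∘ Sum.inr) * pdDynamics L Mx Ml z t (Sum.inr k) := by
    have e0 : mDot (pdMetric Mx Ml) (pdDynamics L Mx Ml) z t (Sum.inr i) (Sum.inr j)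
        = ∑ s, pd (fun y => pdMetric Mx Ml y (Sum.inr i) (Sum.inr j)) s z
            * pdDynamics L Mx Ml z t s := rfl
    rw [e0]
    simp only [pdMetric_22]
    rw [Fintype.sum_sum_type]
    simp [hpdz i j, hpdl i j]
  have e2 : ((jacobian (pdDynamics L Mx Ml) z t)ᵀ * pdMetric Mx Ml z) (Sum.inr i) (Sum.inr j)
      = - pd (fun y => pd (fun y' => -bigL L t y') (Sum.inr j) y) (Sum.inr i) z
        - ∑ k, pd (fun x' => Ml x' j k) i (z ∘ Sum.inr)
            * pdDynamics L Mx Ml z t (Sum.inr k) := by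
    rw [Matrix.mul_apply, Fintype.sum_sum_type]
    simp only [Matrix.transpose_apply, pdMetric_12, mul_zero, Finset.sum_const_zero,
      zero_add, pdMetric_22]
    have step1 : ∑ k, jacobian (pdDynamics L Mx Ml) z t (Sum.inr k) (Sum.inr i)
          * Ml (z ∘ Sum.inr) k j
        = ∑ k, Ml (z ∘ Sum.inr) j k
            * pd (fun y => pdDynamics L Mx Ml y t (Sum.inr k)) (Sum.inr i) z := by
      refine Finset.sum_congr rfl fun k _ => ?_
      have hs := (hMlsymm (z ∘ Sum.inr)).apply j k
      rw [show jacobian (pdDynamics L Mx Ml) z t (Sum.inr k) (Sum.inr i)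
        = pd (fun y => pdDynamics L Mx Ml y t (Sum.inr k)) (Sum.inr i) z from rfl, hs]
      ring
    rw [step1, coreR hL hMlsm hMlpos t z j (Sum.inr i)]
    congr 1
    exact Finset.sum_congr rfl fun k _ => by rw [hpdl j k]
  have e3 : (pdMetric Mx Ml z * jacobian (pdDynamics L Mx Ml) z t) (Sum.inr i) (Sum.inr j)
      = - pd (fun y => pd (fun y' => -bigL L t y') (Sum.inr i) y) (Sum.inr j) z
        - ∑ k, pd (fun x' => Ml x' i k) j (z ∘ Sum.inr)
            * pdDynamics L Mx Ml z t (Sum.inr k) := by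
    rw [Matrix.mul_apply, Fintype.sum_sum_type]
    simp only [pdMetric_21, zero_mul, Finset.sum_const_zero, zero_add, pdMetric_22]
    have step1 : ∑ k, Ml (z ∘ Sum.inr) i k * jacobian (pdDynamics L Mx Ml) z t (Sum.inr k) (Sum.inr j)
        = ∑ k, Ml (z ∘ Sum.inr) i k
            * pd (fun y => pdDynamics L Mx Ml y t (Sum.inr k)) (Sum.inr j) z := rfl
    rw [step1, coreR hL hMlsm hMlpos t z i (Sum.inr j)]
    congr 1
    exact Finset.sum_congr rfl fun k _ => by rw [hpdl i k]
  have hr : riemHess Ml (fun μ => -L (z ∘ Sum.inl) μ t) (z ∘ Sum.inr) i j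
      = pd (fun y => pd (fun y' => -bigL L t y') (Sum.inr j) y) (Sum.inr i) z
        - ∑ k, christoffel Ml k i j (z ∘ Sum.inr)
            * pd (fun μ => -L (z ∘ Sum.inl) μ t) k (z ∘ Sum.inr) := by
    have e0 : riemHess Ml (fun μ => -L (z ∘ Sum.inl) μ t) (z ∘ Sum.inr) i j
        = pd (fun y => pd (fun y' => -L (z ∘ Sum.inl) y' t) j y) i (z ∘ Sum.inr)
          - ∑ k, christoffel Ml k i j (z ∘ Sum.inr)
              * pd (fun μ => -L (z ∘ Sum.inl) μ t) k (z ∘ Sum.inr) := rfl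
    rw [e0, pd_pd_R hL t z i j]
  have hPdet : IsUnit (Ml (z ∘ Sum.inr)).det := (hMlpos _).det_pos.ne'.isUnit
  have hc : ∑ k, christoffel Ml k i j (z ∘ Sum.inr)
        * pd (fun μ => -L (z ∘ Sum.inl) μ t) k (z ∘ Sum.inr)
      = -(1/2 : ℝ) * ∑ s, (pd (fun x' => Ml x' i s) j (z ∘ Sum.inr)
          + pd (fun x' => Ml x' j s) i (z ∘ Sum.inr)
          - pd (fun x' => Ml x' i j) s (z ∘ Sum.inr))
          * pdDynamics L Mx Ml z t (Sum.inr s) := by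
    set D3 : Fin m → ℝ := fun s => pd (fun x' => Ml x' i s) j (z ∘ Sum.inr)
        + pd (fun x' => Ml x' j s) i (z ∘ Sum.inr)
        - pd (fun x' => Ml x' i j) s (z ∘ Sum.inr) with hD3
    set hxv : Fin m → ℝ := fun s => pdDynamics L Mx Ml z t (Sum.inr s) with hhxv
    have hLHS : ∑ k, christoffel Ml k i j (z ∘ Sum.inr)
          * pd (fun μ => -L (z ∘ Sum.inl) μ t) k (z ∘ Sum.inr)
        = ((1/2 : ℝ) • ((Ml (z ∘ Sum.inr))⁻¹ *ᵥ D3)) ⬝ᵥ (-(Ml (z ∘ Sum.inr) *ᵥ hxv)) := by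
      rw [dotProduct]
      refine Finset.sum_congr rfl fun k _ => ?_
      have h1 : christoffel Ml k i j (z ∘ Sum.inr)
          = ((1/2 : ℝ) • ((Ml (z ∘ Sum.inr))⁻¹ *ᵥ D3)) k := by
        simp only [christoffel, Pi.smul_apply, smul_eq_mul, Matrix.mulVec, dotProduct, hD3]
      have h2 : pd (fun μ => -L (z ∘ Sum.inl) μ t) k (z ∘ Sum.inr)
          = (-(Ml (z ∘ Sum.inr) *ᵥ hxv)) k := by
        rw [pd_neg, pdR_eq hL t z k]
        have hm := metric_h_R (Mx := Mx) hL hMlpos t z k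
        rw [pd_neg] at hm
        simp only [Pi.neg_apply, Matrix.mulVec, dotProduct, hhxv]
        linarith [hm]
      rw [h1, h2]
    rw [hLHS, contract_dot _ (hMlsymm _) hPdet]
    rw [dotProduct]
  rw [e1, e2, e3, hr, hc]
  have hsym2 : pd (fun y => pd (fun y' => -bigL L t y') (Sum.inr i) y) (Sum.inr j) z
      = pd (fun y => pd (fun y' => -bigL L t y') (Sum.inr j) y) (Sum.inr i) z :=
    pd_pd_symm ((bigL_contDiff hL t).neg) (Sum.inr j) (Sum.inr i) z
  rw [hsym2]
  have hsplit : ∑ s, (pd (fun x' => Ml x' i s) j (z ∘ Sum.inr)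
        + pd (fun x' => Ml x' j s) i (z ∘ Sum.inr)
        - pd (fun x' => Ml x' i j) s (z ∘ Sum.inr)) * pdDynamics L Mx Ml z t (Sum.inr s)
      = (∑ s, pd (fun x' => Ml x' i s) j (z ∘ Sum.inr) * pdDynamics L Mx Ml z t (Sum.inr s))
        + (∑ s, pd (fun x' => Ml x' j s) i (z ∘ Sum.inr) * pdDynamics L Mx Ml z t (Sum.inr s))
        - ∑ s, pd (fun x' => Ml x' i j) s (z ∘ Sum.inr) * pdDynamics L Mx Ml z t (Sum.inr s) := by
    rw [← Finset.sum_add_distrib, ← Finset.sum_sub_distrib]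
    exact Finset.sum_congr rfl fun s _ => by ring
  rw [hsplit]
  ring

include hL hMxsm hMxsymm hMxpos hMlsm hMlsymm hMlpos in
lemma block_xl (t : ℝ) (z : (Fin n ⊕ Fin m) → ℝ) (i : Fin n) (j : Fin m) :
    mDot (pdMetric Mx Ml) (pdDynamics L Mx Ml) z t (Sum.inl i) (Sum.inr j)
      + ((jacobian (pdDynamics L Mx Ml) z t)ᵀ * pdMetric Mx Ml z) (Sum.inl i) (Sum.inr j)
      + (pdMetric Mx Ml z * jacobian (pdDynamics L Mx Ml) z t) (Sum.inl i) (Sum.inr j)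
      = 0 := by
  have e1 : mDot (pdMetric Mx Ml) (pdDynamics L Mx Ml) z t (Sum.inl i) (Sum.inr j) = 0 := by
    have e0 : mDot (pdMetric Mx Ml) (pdDynamics L Mx Ml) z t (Sum.inl i) (Sum.inr j)
        = ∑ s, pd (fun y => pdMetric Mx Ml y (Sum.inl i) (Sum.inr j)) s z
            * pdDynamics L Mx Ml z t s := rfl
    rw [e0]
    simp [pdMetric_12, pd_const]
  have e2 : ((jacobian (pdDynamics L Mx Ml) z t)ᵀ * pdMetric Mx Ml z) (Sum.inl i) (Sum.inr j)
      = - pd (fun y => pd (fun y' => -bigL L t y') (Sum.inr j) y) (Sum.inl i) z := by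
    rw [Matrix.mul_apply, Fintype.sum_sum_type]
    simp only [Matrix.transpose_apply, pdMetric_12, mul_zero, Finset.sum_const_zero,
      zero_add, pdMetric_22]
    have step1 : ∑ k, jacobian (pdDynamics L Mx Ml) z t (Sum.inr k) (Sum.inl i)
          * Ml (z ∘ Sum.inr) k j
        = ∑ k, Ml (z ∘ Sum.inr) j k
            * pd (fun y => pdDynamics L Mx Ml y t (Sum.inr k)) (Sum.inl i) z := by
      refine Finset.sum_congr rfl fun k _ => ?_
      have hs := (hMlsymm (z ∘ Sum.inr)).apply j k
      rw [show jacobian (pdDynamics L Mx Ml) z t (Sum.inr k) (Sum.inl i)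
        = pd (fun y => pdDynamics L Mx Ml y t (Sum.inr k)) (Sum.inl i) z from rfl, hs]
      ring
    rw [step1, coreR hL hMlsm hMlpos t z j (Sum.inl i)]
    have hz : ∀ k : Fin m, pd (fun y => Ml (y ∘ Sum.inr) j k) (Sum.inl i) z = 0 := fun k => by
      simpa using pd_comp_res2 (((hMlsm j k).differentiable (by simp)).differentiableAt) (Sum.inl i)
    simp [hz]
  have e3 : (pdMetric Mx Ml z * jacobian (pdDynamics L Mx Ml) z t) (Sum.inl i) (Sum.inr j)
      = - pd (fun y => pd (bigL L t) (Sum.inl i) y) (Sum.inr j) z := by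
    rw [Matrix.mul_apply, Fintype.sum_sum_type]
    simp only [pdMetric_12, zero_mul, Finset.sum_const_zero, add_zero, pdMetric_11]
    have step1 : ∑ k, Mx (z ∘ Sum.inl) i k * jacobian (pdDynamics L Mx Ml) z t (Sum.inl k) (Sum.inr j)
        = ∑ k, Mx (z ∘ Sum.inl) i k
            * pd (fun y => pdDynamics L Mx Ml y t (Sum.inl k)) (Sum.inr j) z := rfl
    rw [step1, coreL hL hMxsm hMxpos t z i (Sum.inr j)]
    have hz : ∀ k : Fin n, pd (fun y => Mx (y ∘ Sum.inl) i k) (Sum.inr j) z = 0 := fun k => by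
      simpa using pd_comp_res1 (((hMxsm i k).differentiable (by simp)).differentiableAt) (Sum.inr j)
    simp [hz]
  rw [e1, e2, e3]
  have hneg : pd (fun y => pd (fun y' => -bigL L t y') (Sum.inr j) y) (Sum.inl i) z
      = -pd (fun y => pd (bigL L t) (Sum.inr j) y) (Sum.inl i) z := by
    have h1 : (fun y => pd (fun y' => -bigL L t y') (Sum.inr j) y)
        = fun y => -pd (bigL L t) (Sum.inr j) y := funext fun y => pd_neg (Sum.inr j)
    rw [h1]
    exact pd_neg (Sum.inl i)
  rw [hneg]
  rw [pd_pd_symm (bigL_contDiff hL t) (Sum.inl i) (Sum.inr j) z]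
  ring

include hL hMxsm hMxsymm hMxpos hMlsm hMlsymm hMlpos in
lemma block_lx (t : ℝ) (z : (Fin n ⊕ Fin m) → ℝ) (i : Fin m) (j : Fin n) :
    mDot (pdMetric Mx Ml) (pdDynamics L Mx Ml) z t (Sum.inr i) (Sum.inl j)
      + ((jacobian (pdDynamics L Mx Ml) z t)ᵀ * pdMetric Mx Ml z) (Sum.inr i) (Sum.inl j)
      + (pdMetric Mx Ml z * jacobian (pdDynamics L Mx Ml) z t) (Sum.inr i) (Sum.inl j)
      = 0 := by
  have e1 : mDot (pdMetric Mx Ml) (pdDynamics L Mx Ml) z t (Sum.inr i) (Sum.inl j) = 0 := by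
    have e0 : mDot (pdMetric Mx Ml) (pdDynamics L Mx Ml) z t (Sum.inr i) (Sum.inl j)
        = ∑ s, pd (fun y => pdMetric Mx Ml y (Sum.inr i) (Sum.inl j)) s z
            * pdDynamics L Mx Ml z t s := rfl
    rw [e0]
    simp [pdMetric_21, pd_const]
  have e2 : ((jacobian (pdDynamics L Mx Ml) z t)ᵀ * pdMetric Mx Ml z) (Sum.inr i) (Sum.inl j)
      = - pd (fun y => pd (bigL L t) (Sum.inl j) y) (Sum.inr i) z := by
    rw [Matrix.mul_apply, Fintype.sum_sum_type]
    simp only [Matrix.transpose_apply, pdMetric_21, mul_zero, Finset.sum_const_zero,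
      add_zero, pdMetric_11]
    have step1 : ∑ k, jacobian (pdDynamics L Mx Ml) z t (Sum.inl k) (Sum.inr i)
          * Mx (z ∘ Sum.inl) k j
        = ∑ k, Mx (z ∘ Sum.inl) j k
            * pd (fun y => pdDynamics L Mx Ml y t (Sum.inl k)) (Sum.inr i) z := by
      refine Finset.sum_congr rfl fun k _ => ?_
      have hs := (hMxsymm (z ∘ Sum.inl)).apply j k
      rw [show jacobian (pdDynamics L Mx Ml) z t (Sum.inl k) (Sum.inr i)
        = pd (fun y => pdDynamics L Mx Ml y t (Sum.inl k)) (Sum.inr i) z from rfl, hs]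
      ring
    rw [step1, coreL hL hMxsm hMxpos t z j (Sum.inr i)]
    have hz : ∀ k : Fin n, pd (fun y => Mx (y ∘ Sum.inl) j k) (Sum.inr i) z = 0 := fun k => by
      simpa using pd_comp_res1 (((hMxsm j k).differentiable (by simp)).differentiableAt) (Sum.inr i)
    simp [hz]
  have e3 : (pdMetric Mx Ml z * jacobian (pdDynamics L Mx Ml) z t) (Sum.inr i) (Sum.inl j)
      = - pd (fun y => pd (fun y' => -bigL L t y') (Sum.inr i) y) (Sum.inl j) z := by
    rw [Matrix.mul_apply, Fintype.sum_sum_type]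
    simp only [pdMetric_21, zero_mul, Finset.sum_const_zero, zero_add, pdMetric_22]
    have step1 : ∑ k, Ml (z ∘ Sum.inr) i k * jacobian (pdDynamics L Mx Ml) z t (Sum.inr k) (Sum.inl j)
        = ∑ k, Ml (z ∘ Sum.inr) i k
            * pd (fun y => pdDynamics L Mx Ml y t (Sum.inr k)) (Sum.inl j) z := rfl
    rw [step1, coreR hL hMlsm hMlpos t z i (Sum.inl j)]
    have hz : ∀ k : Fin m, pd (fun y => Ml (y ∘ Sum.inr) i k) (Sum.inl j) z = 0 := fun k => by
      simpa using pd_comp_res2 (((hMlsm i k).differentiable (by simp)).differentiableAt) (Sum.inl j)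
    simp [hz]
  rw [e1, e2, e3]
  have hneg : pd (fun y => pd (fun y' => -bigL L t y') (Sum.inr i) y) (Sum.inl j) z
      = -pd (fun y => pd (bigL L t) (Sum.inr i) y) (Sum.inl j) z := by
    have h1 : (fun y => pd (fun y' => -bigL L t y') (Sum.inr i) y)
        = fun y => -pd (bigL L t) (Sum.inr i) y := funext fun y => pd_neg (Sum.inr i)
    rw [h1]
    exact pd_neg (Sum.inl j)
  rw [hneg]
  rw [pd_pd_symm (bigL_contDiff hL t) (Sum.inr i) (Sum.inl j) z]
  ring

end blocks2

/-- If L is g-strongly convex in x (rate α₁, metric M_x) and g-strongly concave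
in λ (rate α₂, metric M_λ), the geodesic primal-dual dynamics are contracting
with rate min(α₁,α₂) in the block-diagonal metric diag(M_x, M_λ). -/
theorem geodesic_primal_dual_contraction {n m : ℕ}
    (L : (Fin n → ℝ) → (Fin m → ℝ) → ℝ → ℝ)
    (Mx : (Fin n → ℝ) → Matrix (Fin n) (Fin n) ℝ)
    (Ml : (Fin m → ℝ) → Matrix (Fin m) (Fin m) ℝ)
    (α₁ α₂ : ℝ) (hα₁ : 0 < α₁) (hα₂ : 0 < α₂)
    (hL : ContDiff ℝ 2 (fun p : ((Fin n → ℝ) × (Fin m → ℝ)) × ℝ => L p.1.1 p.1.2 p.2))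
    (hMxsm : ∀ i j, ContDiff ℝ (⊤ : ℕ∞) fun x => Mx x i j)
    (hMxsymm : ∀ x, (Mx x).IsSymm) (hMxpos : ∀ x, (Mx x).PosDef)
    (hMlsm : ∀ i j, ContDiff ℝ (⊤ : ℕ∞) fun l => Ml l i j)
    (hMlsymm : ∀ l, (Ml l).IsSymm) (hMlpos : ∀ l, (Ml l).PosDef)
    (hHx : ∀ (x : Fin n → ℝ) (l : Fin m → ℝ) (t : ℝ),
      (riemHess Mx (fun y => L y l t) x - α₁ • Mx x).PosSemidef)
    (hHl : ∀ (x : Fin n → ℝ) (l : Fin m → ℝ) (t : ℝ),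
      (riemHess Ml (fun μ => -L x μ t) l - α₂ • Ml l).PosSemidef) :
    ∀ (z : (Fin n ⊕ Fin m) → ℝ) (t : ℝ),
      (-(mDot (pdMetric Mx Ml) (pdDynamics L Mx Ml) z t
          + (jacobian (pdDynamics L Mx Ml) z t)ᵀ * pdMetric Mx Ml z
          + pdMetric Mx Ml z * jacobian (pdDynamics L Mx Ml) z t
          + (2 * min α₁ α₂) • pdMetric Mx Ml z)).PosSemidef := by
  intro z t
  set c := min α₁ α₂ with hc
  have hcle1 : c ≤ α₁ := min_le_left _ _
  have hcle2 : c ≤ α₂ := min_le_right _ _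
  have key : -(mDot (pdMetric Mx Ml) (pdDynamics L Mx Ml) z t
        + (jacobian (pdDynamics L Mx Ml) z t)ᵀ * pdMetric Mx Ml z
        + pdMetric Mx Ml z * jacobian (pdDynamics L Mx Ml) z t
        + (2 * c) • pdMetric Mx Ml z)
      = Matrix.fromBlocks
          ((2:ℝ) • riemHess Mx (fun y => L y (z ∘ Sum.inr) t) (z ∘ Sum.inl)
            - (2*c) • Mx (z ∘ Sum.inl)) 0 0
          ((2:ℝ) • riemHess Ml (fun μ => -L (z ∘ Sum.inl) μ t) (z ∘ Sum.inr)
            - (2*c) • Ml (z ∘ Sum.inr)) := by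
    ext s1 s2
    cases s1 with
    | inl i =>
      cases s2 with
      | inl j =>
        have hb := block_xx (Ml := Ml) hL hMxsm hMxsymm hMxpos t z i j
        simp only [Matrix.neg_apply, Matrix.add_apply, Matrix.smul_apply, pdMetric_11,
          Matrix.fromBlocks_apply₁₁, Matrix.sub_apply, smul_eq_mul]
        linarith [hb]
      | inr j =>
        have hb := block_xl hL hMxsm hMxsymm hMxpos hMlsm hMlsymm hMlpos t z i j
        simp only [Matrix.neg_apply, Matrix.add_apply, Matrix.smul_apply, pdMetric_12,
          Matrix.fromBlocks_apply₁₂, Matrix.zero_apply, smul_eq_mul]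
        linarith [hb]
    | inr i =>
      cases s2 with
      | inl j =>
        have hb := block_lx hL hMxsm hMxsymm hMxpos hMlsm hMlsymm hMlpos t z i j
        simp only [Matrix.neg_apply, Matrix.add_apply, Matrix.smul_apply, pdMetric_21,
          Matrix.fromBlocks_apply₂₁, Matrix.zero_apply, smul_eq_mul]
        linarith [hb]
      | inr j =>
        have hb := block_ll (Mx := Mx) hL hMlsm hMlsymm hMlpos t z i j
        simp only [Matrix.neg_apply, Matrix.add_apply, Matrix.smul_apply, pdMetric_22,
          Matrix.fromBlocks_apply₂₂, Matrix.sub_apply, smul_eq_mul]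
        linarith [hb]
  rw [key]
  have h1 : (2:ℝ) • riemHess Mx (fun y => L y (z ∘ Sum.inr) t) (z ∘ Sum.inl)
        - (2*c) • Mx (z ∘ Sum.inl)
      = (2:ℝ) • (riemHess Mx (fun y => L y (z ∘ Sum.inr) t) (z ∘ Sum.inl)
          - α₁ • Mx (z ∘ Sum.inl)) + (2*(α₁ - c)) • Mx (z ∘ Sum.inl) := by
    ext a b
    simp only [Matrix.sub_apply, Matrix.smul_apply, Matrix.add_apply, smul_eq_mul]
    ring
  have h2 : (2:ℝ) • riemHess Ml (fun μ => -L (z ∘ Sum.inl) μ t) (z ∘ Sum.inr)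
        - (2*c) • Ml (z ∘ Sum.inr)
      = (2:ℝ) • (riemHess Ml (fun μ => -L (z ∘ Sum.inl) μ t) (z ∘ Sum.inr)
          - α₂ • Ml (z ∘ Sum.inr)) + (2*(α₂ - c)) • Ml (z ∘ Sum.inr) := by
    ext a b
    simp only [Matrix.sub_apply, Matrix.smul_apply, Matrix.add_apply, smul_eq_mul]
    ring
  rw [h1, h2]
  exact posSemidef_fromBlocks'
    (posSemidef_add' (posSemidef_smul' (hHx (z ∘ Sum.inl) (z ∘ Sum.inr) t) (by norm_num))
      (posSemidef_smul' (hMxpos _).posSemidef (by linarith)))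
    (posSemidef_add' (posSemidef_smul' (hHl (z ∘ Sum.inl) (z ∘ Sum.inr) t) (by norm_num))
      (posSemidef_smul' (hMlpos _).posSemidef (by linarith)))
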